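/- arXiv:1505.02719 — 2 statements merged into one kernel-verified Lean document; each statement's English description precedes it below -/
import Mathlib

section
/- Let A, B be bounded operators on a complex Hilbert space with A positive and B self-adjoint. If AB is hyponormal, then A + iB is normal. -/
/-!
Put `T = A * B`. With `C = √A`, the nonzero spectrum of `T = C * (C * B)` is that of the
self-adjoint `C * B * C`, so the spectrum of `T` is real. A hyponormal operator satisfies
`‖T x‖² ≤ ‖T² x‖ ‖x‖`, hence `‖Tⁿ‖ = ‖T‖ⁿ` and its norm equals its spectral radius. Every
`T + i s` (`s` real) is again hyponormal with spectrum on the line `Im z = s`, so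
`‖T + i s‖² ≤ ‖T‖² + s²`. Since `Im ⟪(T + i s) x, x⟫ = Im ⟪T x, x⟫ - s ‖x‖²` grows linearly in `s`,
this forces `⟪T x, x⟫` to be real: `T` is self-adjoint, so `A` and `B` commute and `A + i B` is
normal.
-/

open scoped InnerProductSpace
open ContinuousLinearMap

def IsHyponormal {R : Type*} [Mul R] [Star R] [LE R] (a : R) : Prop :=
  a * star a ≤ star a * a

theorem eq_zero_of_forall_mul_le {K : Type*} [Field K] [LinearOrder K] [IsStrictOrderedRing K]
    {b c : K} (h : ∀ s, b * s ≤ c) : b = 0 := by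
  by_contra hb
  have := h ((c + 1) / b)
  rw [mul_div_cancel₀ _ hb] at this
  linarith

theorem ContinuousLinearMap.opNorm_sq_le_bound {𝕜 E F : Type*} [NontriviallyNormedField 𝕜]
    [SeminormedAddCommGroup E] [SeminormedAddCommGroup F] [NormedSpace 𝕜 E] [NormedSpace 𝕜 F]
    (S : E →L[𝕜] F) {C : ℝ} (hC : 0 ≤ C) (h : ∀ x, ‖S x‖ ^ 2 ≤ C * ‖x‖ ^ 2) : ‖S‖ ^ 2 ≤ C := by
  refine (Real.le_sqrt (norm_nonneg S) hC).mp (S.opNorm_le_bound (Real.sqrt_nonneg C) fun x => ?_)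
  rw [← Real.sqrt_sq (norm_nonneg (S x)), ← Real.sqrt_sq (norm_nonneg x), ← Real.sqrt_mul hC]
  exact Real.sqrt_le_sqrt (h x)

theorem spectralRadius_eq_nnnorm_of_norm_pow_succ {A : Type*} [NormedRing A] [NormedAlgebra ℂ A]
    [CompleteSpace A] {a : A} (h : ∀ n : ℕ, ‖a ^ (n + 1)‖ = ‖a‖ ^ (n + 1)) :
    spectralRadius ℂ a = ‖a‖₊ := by
  refine tendsto_nhds_unique ((spectrum.pow_nnnorm_pow_one_div_tendsto_nhds_spectralRadius a).comp
    (Filter.tendsto_add_atTop_nat 1)) (tendsto_const_nhds.congr fun n => ?_)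
  have : ‖a ^ (n + 1)‖₊ = ‖a‖₊ ^ (n + 1) := NNReal.eq (by simpa using h n)
  rw [Function.comp_apply, this, ENNReal.coe_pow, ← ENNReal.rpow_natCast, ← ENNReal.rpow_mul,
    mul_one_div_cancel (by positivity), ENNReal.rpow_one]

theorem im_eq_zero_of_mem_spectrum_mul {A : Type*} [CStarAlgebra A] [PartialOrder A]
    [StarOrderedRing A] {a b : A} (ha : 0 ≤ a) (hb : IsSelfAdjoint b) {z : ℂ}
    (hz : z ∈ spectrum ℂ (a * b)) : z.im = 0 := by
  rcases eq_or_ne z 0 with rfl | hz0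
  · rfl
  set c := CFC.sqrt a
  have hc : IsSelfAdjoint c := (CFC.sqrt_nonneg a).isSelfAdjoint
  have hz_conj : z ∈ spectrum ℂ (c * b * c) := by
    have h := spectrum.nonzero_mul_comm (𝕜 := ℂ) c (c * b)
    rw [← mul_assoc, CFC.sqrt_mul_sqrt_self a ha] at h
    have hz_diff : z ∈ spectrum ℂ (a * b) \ {0} := ⟨hz, hz0⟩
    exact (h ▸ hz_diff).1
  exact (hb.conjugate_self hc).im_eq_zero_of_mem_spectrum hz_conj

theorem IsSelfAdjoint.isStarNormal_add_I_smul {A : Type*} [Ring A] [StarRing A] [Module ℂ A]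
    [StarModule ℂ A] [SMulCommClass ℂ A A] [IsScalarTower ℂ A A] {a b : A}
    (ha : IsSelfAdjoint a) (hb : IsSelfAdjoint b) (hab : Commute a b) :
    IsStarNormal (a + Complex.I • b) := by
  have hstar : star (a + Complex.I • b) = a - Complex.I • b := by
    simp [star_smul, ha.star_eq, hb.star_eq, sub_eq_add_neg]
  refine ⟨?_⟩
  rw [hstar]
  exact ((Commute.refl a).add_right (hab.smul_right _)).sub_left
    ((hab.symm.smul_left _).add_right ((Commute.refl b).smul_right _ |>.smul_left _))

section RCLike

variable {𝕜 E : Type*} [RCLike 𝕜] [NormedAddCommGroup E] [InnerProductSpace 𝕜 E]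
  [CompleteSpace E] {T : E →L[𝕜] E}

theorem isHyponormal_iff_norm_adjoint_apply_le :
    IsHyponormal T ↔ ∀ x, ‖adjoint T x‖ ≤ ‖T x‖ := by
  have hsa : IsSelfAdjoint (star T * T - T * star T) :=
    (IsSelfAdjoint.star_mul_self T).sub (IsSelfAdjoint.mul_star_self T)
  rw [IsHyponormal, ContinuousLinearMap.le_def, isPositive_def', and_iff_right hsa]
  refine forall_congr' fun x => ?_
  rw [reApplyInnerSelf, sub_apply, inner_sub_left, map_sub, sub_nonneg, star_eq_adjoint,
    ← sq_le_sq₀ (norm_nonneg _) (norm_nonneg _), mul_apply_eq_comp, mul_apply_eq_comp,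
    adjoint_inner_left, ← adjoint_inner_right, inner_self_eq_norm_sq, inner_self_eq_norm_sq]

theorem IsHyponormal.add_algebraMap (hT : IsHyponormal T) (c : 𝕜) :
    IsHyponormal (T + algebraMap 𝕜 _ c) := by
  have self_commutator_eq : star (T + c • 1) * (T + c • 1) - (T + c • 1) * star (T + c • 1) =
      star T * T - T * star T := by
    simp only [star_add, star_smul, star_one, mul_add, add_mul, smul_mul_assoc, mul_smul_comm,
      mul_one, one_mul]
    module
  rw [IsHyponormal, Algebra.algebraMap_eq_smul_one, ContinuousLinearMap.le_def, self_commutator_eq]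
  exact hT

theorem IsHyponormal.norm_apply_sq_le (hT : IsHyponormal T) (x : E) :
    ‖T x‖ ^ 2 ≤ ‖T (T x)‖ * ‖x‖ :=
  calc ‖T x‖ ^ 2 = RCLike.re ⟪adjoint T (T x), x⟫_𝕜 := by
        rw [adjoint_inner_left, inner_self_eq_norm_sq]
    _ ≤ ‖adjoint T (T x)‖ * ‖x‖ := re_inner_le_norm _ _
    _ ≤ ‖T (T x)‖ * ‖x‖ := by
        gcongr
        exact isHyponormal_iff_norm_adjoint_apply_le.mp hT _

theorem IsHyponormal.norm_pow_succ_sq_le (hT : IsHyponormal T) (n : ℕ) :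
    ‖T ^ (n + 1)‖ ^ 2 ≤ ‖T ^ (n + 2)‖ * ‖T ^ n‖ := by
  refine (T ^ (n + 1)).opNorm_sq_le_bound (by positivity) fun x => ?_
  calc ‖(T ^ (n + 1)) x‖ ^ 2 = ‖T ((T ^ n) x)‖ ^ 2 := by rw [pow_succ' T n, mul_apply_eq_comp]
    _ ≤ ‖T (T ((T ^ n) x))‖ * ‖(T ^ n) x‖ := hT.norm_apply_sq_le _
    _ = ‖(T ^ (n + 2)) x‖ * ‖(T ^ n) x‖ := by
        rw [pow_succ' T (n + 1), pow_succ' T n, mul_apply_eq_comp, mul_apply_eq_comp]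
    _ ≤ (‖T ^ (n + 2)‖ * ‖x‖) * (‖T ^ n‖ * ‖x‖) := by gcongr <;> exact le_opNorm _ _
    _ = ‖T ^ (n + 2)‖ * ‖T ^ n‖ * ‖x‖ ^ 2 := by ring

theorem IsHyponormal.norm_pow_succ (hT : IsHyponormal T) (n : ℕ) :
    ‖T ^ (n + 1)‖ = ‖T‖ ^ (n + 1) := by
  have norm_pow_le : ∀ n, ‖T ^ n‖ ≤ ‖T‖ ^ n
    | 0 => by rw [pow_zero, pow_zero]; exact norm_id_le
    | n + 1 => norm_pow_le' T n.succ_pos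
  refine le_antisymm (norm_pow_le _) ?_
  induction n with
  | zero => simp
  | succ n ih =>
    rcases (norm_nonneg T).eq_or_lt with hT0 | hTpos
    · simp [← hT0]
    refine le_of_mul_le_mul_right ?_ (pow_pos hTpos n)
    calc ‖T‖ ^ (n + 2) * ‖T‖ ^ n = (‖T‖ ^ (n + 1)) ^ 2 := by ring
      _ ≤ ‖T ^ (n + 1)‖ ^ 2 := by gcongr
      _ ≤ ‖T ^ (n + 2)‖ * ‖T ^ n‖ := hT.norm_pow_succ_sq_le n
      _ ≤ ‖T ^ (n + 2)‖ * ‖T‖ ^ n := by gcongr; exact norm_pow_le n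

end RCLike

section Complex

variable {E : Type*} [NormedAddCommGroup E] [InnerProductSpace ℂ E] [CompleteSpace E]
  {T : E →L[ℂ] E}

theorem IsHyponormal.norm_add_algebraMap_sq_le (hT : IsHyponormal T)
    (hspec : ∀ z ∈ spectrum ℂ T, z.im = 0) (s : ℝ) :
    ‖T + algebraMap ℂ _ (s * Complex.I)‖ ^ 2 ≤ ‖T‖ ^ 2 + s ^ 2 := by
  rcases subsingleton_or_nontrivial E with hE | hE
  · simp
    positivity
  obtain ⟨z, hz, hzS⟩ := spectrum.exists_nnnorm_eq_spectralRadius_of_nonempty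
    (spectrum.nonempty (T + algebraMap ℂ _ (s * Complex.I)))
  rw [spectralRadius_eq_nnnorm_of_norm_pow_succ (hT.add_algebraMap _).norm_pow_succ,
    ENNReal.coe_inj, ← NNReal.coe_inj, coe_nnnorm, coe_nnnorm] at hzS
  rw [← spectrum.add_singleton_eq, Set.add_singleton] at hz
  obtain ⟨w, hw, rfl⟩ := hz
  have hwre : |w.re| ≤ ‖T‖ := (Complex.abs_re_le_norm w).trans (spectrum.norm_le_norm_of_mem hw)
  calc ‖T + algebraMap ℂ _ (s * Complex.I)‖ ^ 2 = w.re ^ 2 + s ^ 2 := by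
        rw [← hzS, Complex.sq_norm, Complex.normSq_apply]
        simp [hspec w hw]
        ring
    _ ≤ ‖T‖ ^ 2 + s ^ 2 := add_le_add_left (sq_le_sq' (abs_le.mp hwre).1 (abs_le.mp hwre).2) _

theorem ContinuousLinearMap.isSelfAdjoint_of_norm_add_algebraMap_sq_le
    (h : ∀ s : ℝ, ‖T + algebraMap ℂ _ (s * Complex.I)‖ ^ 2 ≤ ‖T‖ ^ 2 + s ^ 2) :
    IsSelfAdjoint T := by
  refine isSelfAdjoint_iff_isSymmetric.mpr <| (LinearMap.isSymmetric_iff_inner_map_self_real _).mpr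
    fun x => Complex.conj_eq_iff_im.mpr ?_
  set p := ⟪T x, x⟫_ℂ
  have linear_le_const : ∀ s : ℝ, (-2 * p.im * ‖x‖ ^ 2) * s ≤ ‖T‖ ^ 2 * ‖x‖ ^ 4 := fun s => by
    set S := T + algebraMap ℂ _ (s * Complex.I)
    have him : (⟪S x, x⟫_ℂ).im = p.im - s * ‖x‖ ^ 2 := by
      simp [S, p, inner_self_eq_norm_sq_to_K, ← Complex.ofReal_pow, sub_eq_add_neg]
    have habs : |p.im - s * ‖x‖ ^ 2| ≤ ‖S‖ * ‖x‖ ^ 2 :=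
      calc |p.im - s * ‖x‖ ^ 2| ≤ ‖S x‖ * ‖x‖ :=
            him ▸ (Complex.abs_im_le_norm _).trans (norm_inner_le_norm _ _)
        _ ≤ ‖S‖ * ‖x‖ * ‖x‖ := by gcongr; exact le_opNorm _ _
        _ = ‖S‖ * ‖x‖ ^ 2 := by ring
    have hsq := sq_le_sq' (abs_le.mp habs).1 (abs_le.mp habs).2
    have hS := mul_le_mul_of_nonneg_right (h s) (pow_nonneg (norm_nonneg x) 4)
    nlinarith [sq_nonneg p.im]
  rcases mul_eq_zero.mp (eq_zero_of_forall_mul_le linear_le_const) with h2p | hx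
  · simpa using h2p
  · simp [norm_eq_zero.mp (pow_eq_zero_iff two_ne_zero |>.mp hx)]

theorem IsHyponormal.isSelfAdjoint (hT : IsHyponormal T) (hspec : ∀ z ∈ spectrum ℂ T, z.im = 0) :
    IsSelfAdjoint T :=
  isSelfAdjoint_of_norm_add_algebraMap_sq_le (hT.norm_add_algebraMap_sq_le hspec)

end Complex

variable {H : Type*} [NormedAddCommGroup H] [InnerProductSpace ℂ H] [CompleteSpace H]

theorem stmt_7 (A B : H →L[ℂ] H) (hA : A.IsPositive) (hB : IsSelfAdjoint B)
    (hhyp : ∀ x : H, ‖(ContinuousLinearMap.adjoint (A * B)) x‖ ≤ ‖(A * B) x‖) :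
    IsStarNormal (A + Complex.I • B) := by
  have hAB : IsSelfAdjoint (A * B) :=
    (isHyponormal_iff_norm_adjoint_apply_le.mpr hhyp).isSelfAdjoint fun _ hz =>
      im_eq_zero_of_mem_spectrum_mul ((nonneg_iff_isPositive A).mpr hA) hB hz
  exact hA.isSelfAdjoint.isStarNormal_add_I_smul hB ((hA.isSelfAdjoint.commute_iff hB).mpr hAB)
end

section
/- Let A be a closed densely defined operator with ker(A) = ker(A*). Then the following are equivalent: A is left invertible; A is right invertible; A is invertible. -/
/-!
If `C` is a bounded left inverse of the closed operator `A`, then `y ∈ range A` iff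
`(C y, y) ∈ graph A`, so the range of `A` is closed. A vector orthogonal to the range lies in
`ker A† = ker A`, on which `C ∘ A = id` vanishes; so the range is all of `H` and `C` is a
two-sided inverse. Conversely, a right inverse makes `A` surjective, hence
`ker A = ker A† = (range A)ᗮ = 0`, and an injective operator with a right inverse is invertible.
-/

open LinearPMap

variable {H : Type*} [NormedAddCommGroup H] [InnerProductSpace ℂ H] [CompleteSpace H]

/-- `A` is right invertible: `A ∘ B = I` for some bounded everywhere-defined `B`. -/
def PMapRightInv (A : H →ₗ.[ℂ] H) : Prop :=
  ∃ B : H →L[ℂ] H, ∀ y : H, ∃ h : B y ∈ A.domain, A ⟨B y, h⟩ = y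

/-- `A` is left invertible: `C ∘ A ⊆ I` for some bounded everywhere-defined `C`. -/
def PMapLeftInv (A : H →ₗ.[ℂ] H) : Prop :=
  ∃ C : H →L[ℂ] H, ∀ x : A.domain, C (A x) = x

/-- `A` is invertible: `A ∘ B = I` and `B ∘ A ⊆ I` for some bounded `B`. -/
def PMapInv (A : H →ₗ.[ℂ] H) : Prop :=
  ∃ B : H →L[ℂ] H, (∀ y : H, ∃ h : B y ∈ A.domain, A ⟨B y, h⟩ = y) ∧
    ∀ x : A.domain, B (A x) = x

namespace LinearPMap

section ClosedRange

variable {R E F : Type*} [CommRing R] [AddCommGroup E] [AddCommGroup F] [Module R E] [Module R F]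
  [TopologicalSpace E] [TopologicalSpace F]

theorem isClosed_range_of_leftInverse {A : E →ₗ.[R] F} (hA : A.IsClosed) (C : F →L[R] E)
    (hC : ∀ x : A.domain, C (A x) = x) : _root_.IsClosed (Set.range A) := by
  have hrange : Set.range A = (fun y => (C y, y)) ⁻¹' (A.graph : Set (E × F)) := by
    ext y
    simp only [Set.mem_range, Set.mem_preimage, SetLike.mem_coe, mem_graph_iff]
    constructor
    · rintro ⟨x, rfl⟩
      exact ⟨x, (hC x).symm, rfl⟩
    · rintro ⟨x, -, hx⟩
      exact ⟨x, hx⟩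
  rw [hrange]
  exact hA.preimage (C.continuous.prodMk continuous_id)

end ClosedRange

variable {𝕜 E F : Type*} [RCLike 𝕜] [NormedAddCommGroup E] [InnerProductSpace 𝕜 E]
  [NormedAddCommGroup F] [InnerProductSpace 𝕜 F] {A : E →ₗ.[𝕜] F}

local notation "⟪" x ", " y "⟫" => inner 𝕜 x y

theorem surjective_of_isClosed_range [CompleteSpace F] (hrange : _root_.IsClosed (Set.range A))
    (horth : ∀ z : F, (∀ x : A.domain, ⟪z, A x⟫ = 0) → z = 0) : Function.Surjective A := by
  set K := LinearMap.range A.toFun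
  have hK : _root_.IsClosed (K : Set F) := by rwa [LinearMap.coe_range]
  have hKorth : Kᗮ = ⊥ :=
    (Submodule.eq_bot_iff _).2 fun z hz =>
      horth z fun x => (Submodule.mem_orthogonal' K z).1 hz _ (LinearMap.mem_range_self _ x)
  have hKtop : K = ⊤ := by
    rw [← hK.submodule_topologicalClosure_eq, Submodule.topologicalClosure_eq_top_iff, hKorth]
  exact fun y => LinearMap.mem_range.1 (hKtop ▸ Submodule.mem_top : y ∈ K)

variable [CompleteSpace E] (hdense : Dense (A.domain : Set E))
include hdense

theorem adjoint_eq_zero_of_forall_inner_eq_zero {z : F} (hz : ∀ x : A.domain, ⟪z, A x⟫ = 0) :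
    ∃ h : z ∈ A†.domain, A† ⟨z, h⟩ = 0 := by
  have hdom : z ∈ A†.domain :=
    mem_adjoint_domain_of_exists z ⟨0, fun x => by rw [inner_zero_left, hz x]⟩
  exact ⟨hdom, adjoint_apply_eq hdense _ fun x => by rw [inner_zero_left, hz x]⟩

theorem eq_zero_of_adjoint_apply_eq_zero (hsurj : Function.Surjective A) {y : A†.domain}
    (hy : A† y = 0) : (y : F) = 0 := by
  obtain ⟨x, hx⟩ := hsurj y
  rw [← inner_self_eq_zero (𝕜 := 𝕜)]
  calc ⟪(y : F), (y : F)⟫ = ⟪(y : F), A x⟫ := by rw [hx]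
    _ = ⟪A† y, (x : E)⟫ := (adjoint_isFormalAdjoint hdense y x).symm
    _ = 0 := by rw [hy, inner_zero_left]

end LinearPMap

section Invertibility

variable {A : H →ₗ.[ℂ] H}

theorem PMapRightInv.pmapInv (hdense : Dense (A.domain : Set H))
    (hker : ∀ x : A.domain, A x = 0 → ∃ h : (x : H) ∈ A†.domain, A† ⟨(x : H), h⟩ = 0)
    (h : PMapRightInv A) : PMapInv A := by
  obtain ⟨B, hB⟩ := h
  have hsurj : Function.Surjective A := fun y =>
    let ⟨hy, hAy⟩ := hB y; ⟨⟨B y, hy⟩, hAy⟩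
  have hinj : Function.Injective A := (injective_iff_map_eq_zero A.toFun).2 fun x hx =>
    let ⟨_, hx'⟩ := hker x hx
    Subtype.ext (eq_zero_of_adjoint_apply_eq_zero hdense hsurj hx')
  refine ⟨B, hB, fun x => ?_⟩
  obtain ⟨_, hx⟩ := hB (A x)
  exact congrArg Subtype.val (hinj hx)

theorem PMapLeftInv.pmapInv (hclosed : A.IsClosed) (hdense : Dense (A.domain : Set H))
    (hker : ∀ y : A†.domain, A† y = 0 → ∃ h : (y : H) ∈ A.domain, A ⟨(y : H), h⟩ = 0)
    (h : PMapLeftInv A) : PMapInv A := by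
  obtain ⟨C, hC⟩ := h
  have hsurj : Function.Surjective A :=
    surjective_of_isClosed_range (isClosed_range_of_leftInverse hclosed C hC) fun z hz => by
      obtain ⟨hz', hAz⟩ := adjoint_eq_zero_of_forall_inner_eq_zero hdense hz
      obtain ⟨hzA, hAz⟩ := hker ⟨z, hz'⟩ hAz
      simpa [hAz] using (hC ⟨z, hzA⟩).symm
  refine ⟨C, fun y => ?_, hC⟩
  obtain ⟨x, rfl⟩ := hsurj y
  have hCx : C (A x) = x := hC x
  exact ⟨hCx ▸ x.2, by congr 1; exact Subtype.ext hCx⟩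

end Invertibility

theorem stmt_12 (A : H →ₗ.[ℂ] H) (hclosed : A.IsClosed)
    (hdense : Dense (A.domain : Set H))
    (hker1 : ∀ x : A.domain, A x = 0 → ∃ h : (x : H) ∈ A†.domain, A† ⟨(x : H), h⟩ = 0)
    (hker2 : ∀ y : A†.domain, A† y = 0 → ∃ h : (y : H) ∈ A.domain, A ⟨(y : H), h⟩ = 0) :
    (PMapLeftInv A ↔ PMapRightInv A) ∧ (PMapRightInv A ↔ PMapInv A) := by
  have hinv_right : PMapInv A → PMapRightInv A := fun ⟨B, hB, _⟩ => ⟨B, hB⟩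
  have hinv_left : PMapInv A → PMapLeftInv A := fun ⟨B, _, hB⟩ => ⟨B, hB⟩
  exact ⟨⟨fun h => hinv_right (h.pmapInv hclosed hdense hker2),
      fun h => hinv_left (h.pmapInv hdense hker1)⟩,
    ⟨PMapRightInv.pmapInv hdense hker1, hinv_right⟩⟩
end
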